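/- Every primitive unimodular proper S-adic subshift is aperiodic, i.e., it contains no point x with S^n x = x for some n > 0. -/

import Mathlib

open MeasureTheory Filter

section SadicPrelude

variable {A : Type*}

/-- The shift map on bi-infinite words. -/
def shift (x : ℤ → A) : ℤ → A := fun n => x (n + 1)

/-- The word `w` occurs (as a factor) in the bi-infinite word `x`. -/
def OccursIn (w : List A) (x : ℤ → A) : Prop :=
  ∃ i : ℤ, ∀ k : Fin w.length, x (i + (k.1 : ℤ)) = w.get k

/-- The language of a subshift `X`. -/
def Lang (X : Set (ℤ → A)) : Set (List A) := {w | ∃ x ∈ X, OccursIn w x}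

/-- Apply a morphism (substitution) to a word, by concatenation. -/
def wordApply (σ : A → List A) (w : List A) : List A := w.flatMap σ

/-- Composition of morphisms: first apply `τ`, then `σ`. -/
def morComp (σ τ : A → List A) : A → List A := fun a => wordApply σ (τ a)

/-- A morphism is non-erasing if images of letters are nonempty. -/
def NonErasing (σ : A → List A) : Prop := ∀ a, σ a ≠ []

/-- Incidence matrix of a morphism: entry `(b,a)` is the number of occurrences of `b` in `σ a`. -/
def incMat [Fintype A] [DecidableEq A] (σ : A → List A) : Matrix A A ℤ :=
  Matrix.of fun b a => ((σ a).count b : ℤ)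

/-- A morphism is unimodular if its incidence matrix has determinant ±1. -/
def IsUnimodular [Fintype A] [DecidableEq A] (σ : A → List A) : Prop :=
  (incMat σ).det = 1 ∨ (incMat σ).det = -1

/-- Left proper: all images start with the same letter. -/
def IsLeftProper (σ : A → List A) : Prop := ∃ b : A, ∀ a, (σ a).head? = some b

/-- Right proper: all images end with the same letter. -/
def IsRightProper (σ : A → List A) : Prop := ∃ b : A, ∀ a, (σ a).getLast? = some b

/-- Proper: left and right proper. -/
def IsProper (σ : A → List A) : Prop := IsLeftProper σ ∧ IsRightProper σ

/-- `compFrom τ n m` is the composition `τ_n ∘ τ_{n+1} ∘ ⋯ ∘ τ_{n+m-1}`. -/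
def compFrom (τ : ℕ → A → List A) (n : ℕ) : ℕ → A → List A
  | 0 => fun a => [a]
  | m + 1 => morComp (compFrom τ n m) (τ (n + m))

/-- `compSeq τ n` is the composition `τ_0 ∘ τ_1 ∘ ⋯ ∘ τ_{n-1}`. -/
def compSeq (τ : ℕ → A → List A) : ℕ → A → List A := compFrom τ 0

/-- The maximal length of images of letters under `τ_0 ∘ ⋯ ∘ τ_{n-1}` tends to infinity. -/
def GrowsUnbounded [Fintype A] (τ : ℕ → A → List A) : Prop :=
  Tendsto (fun n => Finset.univ.sup fun a : A => (compSeq τ n a).length) atTop atTop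

/-- A directive sequence is primitive if for all `n` there is `m > 0` such that every letter
occurs in every image of `τ_n ∘ ⋯ ∘ τ_{n+m-1}`. -/
def IsPrimitive (τ : ℕ → A → List A) : Prop :=
  ∀ n : ℕ, ∃ m : ℕ, 0 < m ∧ ∀ a b : A, b ∈ compFrom τ n m a

/-- The language of a directive sequence: all factors of the images `τ_0 ∘ ⋯ ∘ τ_{n-1}(a)`. -/
def SadicLang (τ : ℕ → A → List A) : Set (List A) :=
  {w | ∃ (n : ℕ) (a : A), w <:+: compSeq τ n a}

/-- The S-adic subshift generated by a directive sequence. -/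
def SadicShift (τ : ℕ → A → List A) : Set (ℤ → A) :=
  {x | ∀ w : List A, OccursIn w x → w ∈ SadicLang τ}

/-- The shift map restricted to an invariant set `X`. -/
def shiftOn (X : Set (ℤ → A)) (h : ∀ x ∈ X, shift x ∈ X) : X → X :=
  fun x => ⟨shift x.1, h x.1 x.2⟩

/-- The cylinder of a letter `a` inside `X`. -/
def cylLetter (X : Set (ℤ → A)) (a : A) : Set X := {x : X | x.1 0 = a}

/-- The cylinder of a word `w` inside `X`. -/
def cylWord (X : Set (ℤ → A)) (w : List A) : Set X :=
  {x : X | ∀ k : Fin w.length, x.1 (k.1 : ℤ) = w.get k}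

/-- `μ` is a `T`-invariant Borel probability measure. -/
def InvProb {Y : Type*} [MeasurableSpace Y] (T : Y → Y) (μ : Measure Y) : Prop :=
  IsProbabilityMeasure μ ∧ MeasurePreserving T μ μ

/-- A real-valued function is balanced for the dynamical system given by `T`. -/
def IsBalanced {Y : Type*} (T : Y → Y) (f : Y → ℝ) : Prop :=
  ∃ C : ℝ, 0 < C ∧ ∀ x y : Y, ∀ n : ℕ,
    |∑ i ∈ Finset.range (n + 1), (f (T^[i] x) - f (T^[i] y))| ≤ C

end SadicPrelude


section Stmt3Aux
variable {A : Type*}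

lemma prefix_of_prefix_of_prefix {l₁ l₂ l₃ : List A} (h1 : l₁ <+: l₃) (h2 : l₂ <+: l₃)
    (h : l₁.length ≤ l₂.length) : l₁ <+: l₂ := by
  rw [List.prefix_iff_eq_take] at h2
  rw [h2]
  exact List.prefix_take_iff.mpr ⟨h1, h⟩

lemma prefix_flatMap (σ : A → List A) (R : ℕ) (hR : ∀ c, (σ c).length ≤ R) :
    ∀ (u w : List A), w <+: u.flatMap σ →
      ∃ u', u' <+: u ∧ u'.flatMap σ <+: w ∧ w.length ≤ (u'.flatMap σ).length + R := by
  intro u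
  induction u with
  | nil =>
    intro w hw
    have hwnil : w = [] := List.prefix_nil.mp (by simpa using hw)
    exact ⟨[], List.prefix_refl _, by simp [hwnil], by simp [hwnil]⟩
  | cons c u ih =>
    intro w hw
    rw [List.flatMap_cons] at hw
    by_cases hlen : w.length ≤ (σ c).length
    · exact ⟨[], List.nil_prefix, by simp, by simpa using hlen.trans (hR c)⟩
    · have hσw : σ c <+: w :=
        prefix_of_prefix_of_prefix (List.prefix_append _ _) hw (le_of_not_ge hlen)
      obtain ⟨w₂, rfl⟩ := hσw
      have hw₂ : w₂ <+: u.flatMap σ := by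
        rwa [List.prefix_append_right_inj] at hw
      obtain ⟨u', hu', hq, hl⟩ := ih w₂ hw₂
      refine ⟨c :: u', List.cons_prefix_cons.mpr ⟨rfl, hu'⟩, ?_, ?_⟩
      · rw [List.flatMap_cons]
        exact (List.prefix_append_right_inj _).mpr hq
      · rw [List.flatMap_cons]
        simp only [List.length_append]
        omega

lemma infix_flatMap (σ : A → List A) (R : ℕ) (hR : ∀ c, (σ c).length ≤ R) :
    ∀ (u w : List A), w <:+: u.flatMap σ →
      ∃ u', u' <:+: u ∧ u'.flatMap σ <:+: w ∧ w.length ≤ (u'.flatMap σ).length + 2 * R := by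
  intro u
  induction u with
  | nil =>
    intro w hw
    have hwnil : w = [] := List.eq_nil_of_infix_nil (by simpa using hw)
    exact ⟨[], List.infix_refl _, by simp [hwnil], by simp [hwnil]⟩
  | cons c u ih =>
    intro w hw
    rw [List.flatMap_cons] at hw
    obtain ⟨s, t, hst⟩ := hw
    by_cases hsc : (σ c).length ≤ s.length
    · -- occurrence lies within the tail
      have hs : σ c <+: s :=
        prefix_of_prefix_of_prefix (List.prefix_append _ _) ⟨w ++ t, by simpa using hst⟩ hsc
      obtain ⟨s', rfl⟩ := hs
      have : s' ++ w ++ t = u.flatMap σ := by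
        have := hst
        simpa [List.append_assoc] using this
      obtain ⟨u', hu', hq, hl⟩ := ih w ⟨s', t, this⟩
      exact ⟨u', hu'.trans (List.infix_cons (List.infix_refl u)), hq, hl⟩
    · push_neg at hsc
      by_cases hwd : (σ c).length - s.length ≤ w.length
      · set d := (σ c).length - s.length with hd
        have hdrop : w.drop d ++ t = u.flatMap σ := by
          have h1 : (s ++ (w ++ t)).drop (σ c).length = (w ++ t).drop d := by
            rw [show (σ c).length = s.length + d by omega]
            rw [List.drop_append]
            simp
          have h2 : (σ c ++ u.flatMap σ).drop (σ c).length = u.flatMap σ := by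
            simp
          rw [← List.append_assoc, hst] at h1
          rw [h2] at h1
          rw [h1, List.drop_append_of_le_length hwd]
        obtain ⟨u', hu', hq, hl⟩ := prefix_flatMap σ R hR u (w.drop d) ⟨t, hdrop⟩
        refine ⟨u', (hu'.isInfix).trans (List.infix_cons (List.infix_refl u)), ?_, ?_⟩
        · exact hq.isInfix.trans (List.drop_suffix d w).isInfix
        · have hdR : d ≤ R := le_trans (by omega) (hR c)
          have : w.length = d + (w.drop d).length := by
            rw [List.length_drop]; omega
          omega
      · push_neg at hwd
        refine ⟨[], ⟨[], c :: u, by simp⟩, by simp, ?_⟩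
        have := hR c
        simp only [List.flatMap_nil, List.length_nil, Nat.zero_add]
        omega

lemma flatMap_infix_mono (σ : A → List A) {u₁ u₂ : List A} (h : u₁ <:+: u₂) :
    u₁.flatMap σ <:+: u₂.flatMap σ := by
  obtain ⟨s, t, rfl⟩ := h
  exact ⟨s.flatMap σ, t.flatMap σ, by simp [List.flatMap_append]⟩

lemma length_flatMap_le (σ : A → List A) (R : ℕ) (hR : ∀ c, (σ c).length ≤ R) (u : List A) :
    (u.flatMap σ).length ≤ u.length * R := by
  induction u with
  | nil => simp
  | cons c u ih =>
    rw [List.flatMap_cons, List.length_append, List.length_cons]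
    have := hR c
    calc (σ c).length + (u.flatMap σ).length ≤ R + u.length * R := by omega
    _ = (u.length + 1) * R := by ring

lemma length_le_length_flatMap (σ : A → List A) {c : A} {u : List A} (h : c ∈ u) :
    (σ c).length ≤ (u.flatMap σ).length := by
  obtain ⟨l₁, l₂, rfl⟩ := List.append_of_mem h
  simp [List.flatMap_append]
  omega

lemma pair_infix {a : A} {C D u : List A} (ha : a ∈ C) (hCD : C ++ D <:+: u) (hD : D ≠ []) :
    ∃ b, [a, b] <:+: u := by
  obtain ⟨l₁, l₂, rfl⟩ := List.append_of_mem ha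
  obtain ⟨b, D', rfl⟩ := List.exists_cons_of_ne_nil hD
  cases l₂ with
  | nil =>
    exact ⟨b, List.IsInfix.trans ⟨l₁, D', by simp⟩ hCD⟩
  | cons e l₂' =>
    exact ⟨e, List.IsInfix.trans ⟨l₁, l₂' ++ (b :: D'), by simp⟩ hCD⟩

lemma sum_count_eq_length [Fintype A] [DecidableEq A] (w : List A) :
    ∑ b : A, w.count b = w.length := by
  induction w with
  | nil => simp
  | cons c w ih =>
    simp only [List.count_cons, List.length_cons]
    rw [Finset.sum_add_distrib, ih]
    simp [Finset.sum_ite_eq]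

lemma count_flatMap [Fintype A] [DecidableEq A] (σ : A → List A) (u : List A) (b : A) :
    (u.flatMap σ).count b = ∑ c : A, u.count c * (σ c).count b := by
  induction u with
  | nil => simp
  | cons c u ih =>
    rw [List.flatMap_cons, List.count_append, ih]
    have hc : ∀ d : A, (c :: u).count d = u.count d + if d = c then 1 else 0 := by
      intro d
      rw [List.count_cons]
      congr 1
      rcases eq_or_ne d c with h | h
      · subst h; simp
      · simp [beq_iff_eq, h, Ne.symm h]
    simp only [hc, Nat.add_mul, Finset.sum_add_distrib]
    have h2 : (∑ d : A, (if d = c then 1 else 0) * (σ d).count b) = (σ c).count b := by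
      simp
    omega

end Stmt3Aux

section Stmt3Aux2
variable {A : Type*}

/-- `w` occurs in `x` at position `i`. -/
def OccAt (w : List A) (x : ℤ → A) (i : ℤ) : Prop :=
  ∀ k : Fin w.length, x (i + (k.1 : ℤ)) = w.get k

lemma occAt_prefix {w' w : List A} (h : w' <+: w) {x : ℤ → A} {i : ℤ}
    (hw : OccAt w x i) : OccAt w' x i := by
  obtain ⟨t, rfl⟩ := h
  intro k
  have hk : (k : ℕ) < (w' ++ t).length := by
    simp only [List.length_append]
    omega
  have := hw ⟨k, hk⟩
  rw [this]
  simp [List.get_eq_getElem, List.getElem_append, k.isLt]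

lemma occAt_append_left {y z : List A} {x : ℤ → A} {i : ℤ}
    (h : OccAt (y ++ z) x i) : OccAt y x i :=
  occAt_prefix (List.prefix_append _ _) h

lemma occAt_append_right {y z : List A} {x : ℤ → A} {i : ℤ}
    (h : OccAt (y ++ z) x i) : OccAt z x (i + y.length) := by
  intro k
  have hk : y.length + (k : ℕ) < (y ++ z).length := by
    simp only [List.length_append]
    omega
  have h2 := h ⟨y.length + (k : ℕ), hk⟩
  have h3 : i + y.length + (k.1 : ℤ) = i + ((y.length + (k : ℕ) : ℕ) : ℤ) := by
    push_cast
    ring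
  rw [h3, h2]
  simp [List.get_eq_getElem, List.getElem_append_right]

lemma occAt_infix {w' w : List A} (h : w' <:+: w) {x : ℤ → A} {i : ℤ}
    (hw : OccAt w x i) : ∃ j, OccAt w' x j := by
  obtain ⟨s, t, rfl⟩ := h
  rw [List.append_assoc] at hw
  exact ⟨i + s.length, occAt_append_left (occAt_append_right hw)⟩

lemma occAt_mem {w : List A} {x : ℤ → A} {i : ℤ} (hw : OccAt w x i) {b : A}
    (hb : b ∈ w) : ∃ j : ℤ, x j = b := by
  obtain ⟨⟨q, hq⟩, hget⟩ := List.mem_iff_get.mp hb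
  exact ⟨i + q, by rw [hw ⟨q, hq⟩, hget]⟩

/-- periods are preserved by integer multiples -/
lemma isPer_mul {x : ℤ → A} {q : ℕ} (h : ∀ m : ℤ, x (m + q) = x m) :
    ∀ (t : ℤ) (m : ℤ), x (m + t * q) = x m := by
  intro t
  induction t using Int.induction_on with
  | zero => simp
  | succ n ih =>
    intro m
    have e : m + ((n : ℤ) + 1) * q = (m + q) + n * q := by ring
    rw [e, ih, h]
  | pred n ih =>
    intro m
    have e : m + (-(n : ℤ) - 1) * q = (m - q) + (-(n : ℤ)) * q := by ring
    have e2 : x (m - q) = x m := by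
      have := h (m - q)
      simp only [sub_add_cancel] at this
      exact this.symm
    rw [e, ih, e2]

lemma period_from_double {x : ℤ → A} {p' : ℕ} (hp'pos : 0 < p')
    (hper : ∀ m : ℤ, x (m + p') = x m) {W : List A} (hW : p' ≤ W.length) {i : ℤ} {q : ℕ}
    (h1 : OccAt W x i) (h2 : OccAt W x (i + q)) : ∀ m : ℤ, x (m + q) = x m := by
  intro m
  have hcong := isPer_mul hper
  set k : ℤ := (m - i) % p' with hkdef
  have hk0 : 0 ≤ k := Int.emod_nonneg _ (by exact_mod_cast hp'pos.ne')
  have hklt : k < p' := Int.emod_lt_of_pos _ (by exact_mod_cast hp'pos)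
  set t : ℤ := (m - i) / p' with htdef
  have hm : m = i + k + t * (p' : ℤ) := by
    have h5 := Int.mul_ediv_add_emod (m - i) (p' : ℤ)
    rw [← htdef, ← hkdef] at h5
    linear_combination -h5 + (p' : ℤ) * t - t * (p' : ℤ)  -- t*p' comm
  have hkn : ((k.toNat : ℕ) : ℤ) = k := Int.toNat_of_nonneg hk0
  have hknlt : k.toNat < W.length := by omega
  have e1 : x (i + k) = W.get ⟨k.toNat, hknlt⟩ := by
    have := h1 ⟨k.toNat, hknlt⟩
    rwa [hkn] at this
  have e2 : x (i + q + k) = W.get ⟨k.toNat, hknlt⟩ := by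
    have := h2 ⟨k.toNat, hknlt⟩
    rwa [hkn] at this
  have steps : x (m + q) = x (i + q + k) := by
    rw [show m + (q : ℤ) = (i + q + k) + t * (p' : ℤ) by rw [hm]; ring, hcong]
  have steps2 : x m = x (i + k) := by
    rw [show m = (i + k) + t * (p' : ℤ) by rw [hm], hcong]
  rw [steps, e2, ← e1, steps2]

lemma shift_iterate : ∀ (n : ℕ) (x : ℤ → A) (m : ℤ), shift^[n] x m = x (m + n) := by
  intro n
  induction n with
  | zero => intro x m; simp
  | succ n ih =>
    intro x m
    rw [Function.iterate_succ_apply, ih (shift x) m]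
    show x (m + n + 1) = x (m + (n + 1))
    push_cast
    ring_nf

end Stmt3Aux2

section Stmt3Aux3
variable {A : Type*}

lemma compFrom_succ' (τ : ℕ → A → List A) (n m : ℕ) (a : A) :
    compFrom τ n (m + 1) a = (τ (n + m) a).flatMap (compFrom τ n m) := rfl

lemma compFrom_add (τ : ℕ → A → List A) (n k l : ℕ) (a : A) :
    compFrom τ n (k + l) a = (compFrom τ (n + k) l a).flatMap (compFrom τ n k) := by
  induction l generalizing a with
  | zero => simp [compFrom]
  | succ l ih =>
    have e1 : k + (l + 1) = (k + l) + 1 := by ring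
    rw [e1, compFrom_succ', compFrom_succ']
    have e2 : n + (k + l) = (n + k) + l := by ring
    rw [e2, List.flatMap_assoc]
    have e3 : compFrom τ n (k + l) =
        fun c => (compFrom τ (n + k) l c).flatMap (compFrom τ n k) := funext ih
    rw [e3]

lemma compFrom_ne_nil {τ : ℕ → A → List A} (hner : ∀ n, NonErasing (τ n)) (n : ℕ) :
    ∀ (m : ℕ) (a : A), compFrom τ n m a ≠ [] := by
  intro m
  induction m with
  | zero => intro a; simp [compFrom]
  | succ m ih =>
    intro a
    rw [compFrom_succ']
    intro hnil
    obtain ⟨c, hc⟩ := List.exists_mem_of_ne_nil _ (hner (n + m) a)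
    exact ih c ((List.flatMap_eq_nil_iff.mp hnil) c hc)

lemma mem_compFrom_propagate {τ : ℕ → A → List A} (hner : ∀ n, NonErasing (τ n))
    {n m₁ : ℕ} (h : ∀ a b, b ∈ compFrom τ n m₁ a) :
    ∀ l, m₁ ≤ l → ∀ a b, b ∈ compFrom τ n l a := by
  intro l hl
  induction l, hl using Nat.le_induction with
  | base => exact h
  | succ l hl ih =>
    intro a b
    rw [compFrom_succ']
    obtain ⟨c, hc⟩ := List.exists_mem_of_ne_nil _ (hner (n + l) a)
    exact List.mem_flatMap.mpr ⟨c, hc, ih c b⟩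

variable [Fintype A] [DecidableEq A]

lemma incMat_id : incMat (fun a : A => [a]) = 1 := by
  ext b a
  rcases eq_or_ne b a with h | h
  · subst h
    simp [incMat, Matrix.one_apply]
  · simp [incMat, Matrix.one_apply, h, List.count_singleton', Ne.symm h]

lemma incMat_comp (σ ρ : A → List A) : incMat (morComp σ ρ) = incMat σ * incMat ρ := by
  ext b a
  simp only [incMat, morComp, wordApply, Matrix.of_apply, Matrix.mul_apply]
  rw [count_flatMap]
  push_cast
  exact Finset.sum_congr rfl fun c _ => by ring

lemma det_compFrom {τ : ℕ → A → List A} (huni : ∀ n, IsUnimodular (τ n)) :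
    ∀ k, (incMat (compFrom τ 0 k)).det = 1 ∨ (incMat (compFrom τ 0 k)).det = -1 := by
  intro k
  induction k with
  | zero =>
    left
    have : compFrom τ 0 0 = (fun a : A => [a]) := rfl
    rw [this, incMat_id, Matrix.det_one]
  | succ k ih =>
    have : compFrom τ 0 (k + 1) = morComp (compFrom τ 0 k) (τ (0 + k)) := rfl
    rw [this, incMat_comp, Matrix.det_mul]
    have h2 := huni (0 + k)
    rcases ih with h | h <;> rcases h2 with h2 | h2 <;> rw [h, h2] <;> norm_num

lemma min_length_big {τ : ℕ → A → List A} (hA : Nonempty A) (hner : ∀ n, NonErasing (τ n))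
    (hgrow : GrowsUnbounded τ) (hprim : IsPrimitive τ) :
    ∀ P : ℕ, ∃ K, ∀ k, K ≤ k → ∀ a, P ≤ (compSeq τ k a).length := by
  intro P
  obtain ⟨n0, hn0⟩ := (hgrow.eventually_ge_atTop P).exists
  have hne : (Finset.univ : Finset A).Nonempty := Finset.univ_nonempty
  obtain ⟨c, _, hc⟩ := Finset.exists_mem_eq_sup Finset.univ hne
    (fun a : A => (compSeq τ n0 a).length)
  have hcP : P ≤ (compSeq τ n0 c).length := by rw [← hc]; exact hn0
  obtain ⟨m₁, hm₁pos, hm₁⟩ := hprim n0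
  refine ⟨n0 + m₁, fun k hk a => ?_⟩
  have hsplit : compSeq τ k a = (compFrom τ n0 (k - n0) a).flatMap (compSeq τ n0) := by
    have e : n0 + (k - n0) = k := by omega
    have h7 := compFrom_add τ 0 n0 (k - n0) a
    rw [Nat.zero_add, e] at h7
    exact h7
  have hmem : c ∈ compFrom τ n0 (k - n0) a :=
    mem_compFrom_propagate hner hm₁ (k - n0) (by omega) a c
  calc P ≤ (compSeq τ n0 c).length := hcP
    _ ≤ ((compFrom τ n0 (k - n0) a).flatMap (compSeq τ n0)).length :=
        length_le_length_flatMap _ hmem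
    _ = (compSeq τ k a).length := by rw [← hsplit]

end Stmt3Aux3

theorem stmt3 {A : Type*} [Fintype A] [DecidableEq A] (hcard : 2 ≤ Fintype.card A)
    (τ : ℕ → A → List A) (hner : ∀ n, NonErasing (τ n)) (hgrow : GrowsUnbounded τ)
    (hprim : IsPrimitive τ) (huni : ∀ n, IsUnimodular (τ n)) (hprop : ∀ n, IsProper (τ n)) :
    ∀ x ∈ SadicShift τ, ∀ n : ℕ, 0 < n → shift^[n] x ≠ x := by
  intro x hx p hppos hper0
  classical
  have hA : Nonempty A := Fintype.card_pos_iff.mp (by omega)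
  have hATriv : Nontrivial A := Fintype.one_lt_card_iff_nontrivial.mp (by omega)
  -- x is periodic with period p
  have hperp : ∀ m : ℤ, x (m + p) = x m := by
    intro m
    conv_rhs => rw [← hper0]
    rw [shift_iterate]
  have hexP : ∃ q : ℕ, 0 < q ∧ ∀ m : ℤ, x (m + q) = x m := ⟨p, hppos, hperp⟩
  set p' := Nat.find hexP with hp'def
  obtain ⟨hp'pos, hp'per⟩ := Nat.find_spec hexP
  -- minimal period divides every period
  have hdvd : ∀ q : ℕ, 0 < q → (∀ m : ℤ, x (m + q) = x m) → p' ∣ q := by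
    intro q hqpos hqper
    have hr : ∀ m : ℤ, x (m + (q % p' : ℕ)) = x m := by
      intro m
      have e : m + (q : ℤ) = (m + (q % p' : ℕ)) + ((q / p' : ℕ) : ℤ) * (p' : ℤ) := by
        have e0 : (q % p' : ℕ) + p' * (q / p' : ℕ) = q := Nat.mod_add_div q p'
        have e1 : ((q % p' : ℕ) : ℤ) + (p' : ℤ) * ((q / p' : ℕ) : ℤ) = (q : ℤ) := by
          exact_mod_cast congrArg (Nat.cast : ℕ → ℤ) e0
        linarith [e1]
      have h9 := hqper m
      rw [e, isPer_mul hp'per] at h9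
      exact h9
    by_cases hr0 : q % p' = 0
    · exact Nat.dvd_of_mod_eq_zero hr0
    · exfalso
      have hlt : q % p' < p' := Nat.mod_lt _ hp'pos
      exact Nat.find_min hexP hlt ⟨Nat.pos_of_ne_zero hr0, hr⟩
  -- primitivity constants
  obtain ⟨m₀, hm₀pos, hm₀⟩ := hprim 0
  obtain ⟨K, hK⟩ := min_length_big hA hner hgrow hprim p'
  set n := max K m₀ with hn
  obtain ⟨b₀, hb₀⟩ := (hprop n).1
  set W := compSeq τ n b₀ with hW
  have hWlen : p' ≤ W.length := hK n (le_max_left _ _) b₀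
  set B := compSeq τ (n + 1) with hB
  -- every level-(n+1) block starts with W
  have hpref : ∀ a, W <+: B a := by
    intro a
    have h1 : B a = (τ n a).flatMap (compSeq τ n) := by
      show compFrom τ 0 (n + 1) a = _
      rw [compFrom_succ', Nat.zero_add]
      rfl
    obtain ⟨tl, htl⟩ : ∃ tl, τ n a = b₀ :: tl := by
      have hh := hb₀ a
      cases hcase : τ n a with
      | nil => rw [hcase] at hh; simp at hh
      | cons c tl =>
        rw [hcase] at hh
        simp only [List.head?_cons, Option.some.injEq] at hh
        exact ⟨tl, by rw [hh]⟩
    rw [h1, htl, List.flatMap_cons]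
    exact ⟨_, rfl⟩
  obtain ⟨m₁, hm₁pos, hm₁⟩ := hprim (n + 1)
  set C := compFrom τ (n + 1) m₁ with hC
  set RB := Finset.univ.sup (fun a : A => (B a).length) with hRBdef
  have hRB : ∀ c, (B c).length ≤ RB := fun c =>
    Finset.le_sup (f := fun a : A => (B a).length) (Finset.mem_univ c)
  have hRBpos : 0 < RB :=
    lt_of_lt_of_le (List.length_pos_iff.mpr (compFrom_ne_nil hner 0 (n + 1) b₀)) (hRB b₀)
  set RC := Finset.univ.sup (fun a : A => (C a).length) with hRCdef
  have hRC : ∀ c, (C c).length ≤ RC := fun c =>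
    Finset.le_sup (f := fun a : A => (C a).length) (Finset.mem_univ c)
  -- a long factor of x
  set LB := (Finset.range (n + 1 + m₁)).sup
      (fun k => Finset.univ.sup fun c : A => (compSeq τ k c).length) + 1 with hLBdef
  set L := max LB ((3 * RC + 3) * RB) with hLdef
  set w := (List.range L).map (fun k : ℕ => x ((k : ℕ) : ℤ)) with hwdef
  have hwlen : w.length = L := by simp [hwdef]
  have hwocc : OccAt w x 0 := by
    intro k
    simp [hwdef, List.get_eq_getElem]
  have hwlang : w ∈ SadicLang τ := hx w ⟨0, hwocc⟩
  obtain ⟨N, cN, hwinf⟩ := hwlang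
  have hLle : L ≤ (compSeq τ N cN).length := by
    rw [← hwlen]
    exact hwinf.length_le
  have hNge : n + 1 + m₁ ≤ N := by
    by_contra hlt
    push_neg at hlt
    have h1 : (compSeq τ N cN).length ≤
        Finset.univ.sup (fun c : A => (compSeq τ N c).length) :=
      Finset.le_sup (f := fun c : A => (compSeq τ N c).length) (Finset.mem_univ cN)
    have h2 : Finset.univ.sup (fun c : A => (compSeq τ N c).length) ≤
        (Finset.range (n + 1 + m₁)).sup
          (fun k => Finset.univ.sup fun c : A => (compSeq τ k c).length) :=
      Finset.le_sup (f := fun k => Finset.univ.sup fun c : A => (compSeq τ k c).length)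
        (Finset.mem_range.mpr hlt)
    have h3 : LB ≤ L := le_max_left _ _
    omega
  -- first level decomposition
  have hsplit1 : compSeq τ N cN = (compFrom τ (n + 1) (N - (n + 1)) cN).flatMap B := by
    have e : (n + 1) + (N - (n + 1)) = N := by omega
    have h7 := compFrom_add τ 0 (n + 1) (N - (n + 1)) cN
    rw [Nat.zero_add, e] at h7
    exact h7
  obtain ⟨u', hu'inf, hu'w, hu'len⟩ :=
    infix_flatMap B RB hRB (compFrom τ (n + 1) (N - (n + 1)) cN) w (hsplit1 ▸ hwinf)
  have h3 : 3 * RC + 1 ≤ u'.length := by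
    have h4 : (3 * RC + 3) * RB ≤ w.length := by
      rw [hwlen]
      exact le_max_right _ _
    have h5 := length_flatMap_le B RB hRB u'
    have e : (3 * RC + 3) * RB = (3 * RC + 1) * RB + 2 * RB := by ring
    have h6 : (3 * RC + 1) * RB ≤ u'.length * RB := by omega
    exact Nat.le_of_mul_le_mul_right h6 hRBpos
  -- second level decomposition
  have hsplit2 : compFrom τ (n + 1) (N - (n + 1)) cN =
      (compFrom τ (n + 1 + m₁) (N - (n + 1) - m₁) cN).flatMap C := by
    have e : m₁ + (N - (n + 1) - m₁) = N - (n + 1) := by omega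
    have h7 := compFrom_add τ (n + 1) m₁ (N - (n + 1) - m₁) cN
    rw [e] at h7
    exact h7
  obtain ⟨v', hv'inf, hv'u, hv'len⟩ :=
    infix_flatMap C RC hRC (compFrom τ (n + 1 + m₁) (N - (n + 1) - m₁) cN) u'
      (hsplit2 ▸ hu'inf)
  have hv2 : 2 ≤ v'.length := by
    have h8 := length_flatMap_le C RC hRC v'
    by_contra hlt
    push_neg at hlt
    have h9 : v'.length * RC ≤ 1 * RC := Nat.mul_le_mul_right _ (by omega)
    have h10 : (v'.flatMap C).length ≤ RC := le_trans h8 (by simpa using h9)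
    omega
  rcases v' with _ | ⟨v₀, v''⟩
  · simp at hv2
  rcases v'' with _ | ⟨v₁, rest⟩
  · simp at hv2
  have hCne : ∀ c, C c ≠ [] := compFrom_ne_nil hner (n + 1) m₁
  -- every letter has a complete successor block inside w
  have hpair : ∀ a : A, ∃ nb, [a, nb] <:+: u' := by
    intro a
    have hflat : C v₀ ++ (C v₁ ++ rest.flatMap C) <:+: u' := by
      have e : (v₀ :: v₁ :: rest).flatMap C = C v₀ ++ (C v₁ ++ rest.flatMap C) := by
        simp
      exact e ▸ hv'u
    refine pair_infix (hm₁ v₀ a) hflat ?_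
    intro hnil
    exact hCne v₁ (List.append_eq_nil_iff.mp hnil).1
  have hocc2 : ∀ a : A, ∃ nb : A, ∃ i : ℤ, OccAt (B a ++ B nb) x i := by
    intro a
    obtain ⟨nb, hpi⟩ := hpair a
    have h6 : [a, nb].flatMap B <:+: u'.flatMap B := flatMap_infix_mono B hpi
    have h7 : [a, nb].flatMap B = B a ++ B nb := by simp
    have h5 : B a ++ B nb <:+: w := (h7 ▸ h6).trans hu'w
    obtain ⟨j, hj⟩ := occAt_infix h5 hwocc
    exact ⟨nb, j, hj⟩
  -- the minimal period divides all block lengths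
  have hdivs : ∀ a : A, p' ∣ (B a).length := by
    intro a
    obtain ⟨nb, i, hocc⟩ := hocc2 a
    have hWa : OccAt W x i := occAt_prefix (hpref a) (occAt_append_left hocc)
    have hWb : OccAt W x (i + (B a).length) :=
      occAt_prefix (hpref nb) (occAt_append_right hocc)
    have hq := period_from_double hp'pos hp'per hWlen hWa hWb
    exact hdvd _ (List.length_pos_iff.mpr (compFrom_ne_nil hner 0 (n + 1) a)) hq
  -- unimodularity forces p' = 1
  set M := incMat B with hM
  have hdet : M.det = 1 ∨ M.det = -1 := det_compFrom huni (n + 1)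
  have hcol : ∀ a, ∑ b : A, M b a = ((B a).length : ℤ) := by
    intro a
    have h9 := sum_count_eq_length (B a)
    calc ∑ b : A, M b a = ∑ b : A, (((B a).count b : ℕ) : ℤ) := rfl
      _ = ((∑ b : A, (B a).count b : ℕ) : ℤ) := by push_cast; ring
      _ = ((B a).length : ℤ) := by rw [h9]
  obtain ⟨b₁, b₂, hb12⟩ := exists_pair_ne A
  have hkey : M.det = ∑ a : A, ((B a).length : ℤ) * M.adjugate a b₁ := by
    have h6 := Matrix.mul_adjugate M
    calc M.det = ∑ b : A, (M.det • (1 : Matrix A A ℤ)) b b₁ := by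
          rw [Finset.sum_eq_single b₁]
          · simp [Matrix.one_apply]
          · intro b _ hb
            simp [Matrix.one_apply, hb]
          · intro hb
            exact absurd (Finset.mem_univ b₁) hb
      _ = ∑ b : A, (M * M.adjugate) b b₁ := by rw [h6]
      _ = ∑ b : A, ∑ a : A, M b a * M.adjugate a b₁ := by
          simp [Matrix.mul_apply]
      _ = ∑ a : A, ∑ b : A, M b a * M.adjugate a b₁ := Finset.sum_comm
      _ = ∑ a : A, (∑ b : A, M b a) * M.adjugate a b₁ := by
          exact Finset.sum_congr rfl fun a _ => (Finset.sum_mul _ _ _).symm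
      _ = ∑ a : A, ((B a).length : ℤ) * M.adjugate a b₁ :=
          Finset.sum_congr rfl fun a _ => by rw [hcol a]
  have hdvddet : (p' : ℤ) ∣ M.det := by
    rw [hkey]
    exact Finset.dvd_sum fun a _ =>
      Dvd.dvd.mul_right (Int.natCast_dvd_natCast.mpr (hdivs a)) _
  have hp'dvd1 : (p' : ℤ) ∣ 1 := by
    rcases hdet with h | h
    · rwa [h] at hdvddet
    · rw [h] at hdvddet
      exact (dvd_neg).mp hdvddet
  have hp'1 : p' = 1 := by
    have h9 : (p' : ℤ) ∣ ((1 : ℕ) : ℤ) := by simpa using hp'dvd1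
    exact Nat.dvd_one.mp (Int.natCast_dvd_natCast.mp h9)
  -- so x is constant
  have hxconst : ∀ m : ℤ, x m = x 0 := by
    intro m
    have h9 := isPer_mul hp'per m 0
    rw [← hp'def, hp'1] at h9
    simpa using h9
  -- but every letter occurs in x
  have hletter : ∀ b : A, x 0 = b := by
    intro b
    obtain ⟨nb, i, hocc⟩ := hocc2 b₁
    have hs : B b₁ = (compFrom τ m₀ (n + 1 - m₀) b₁).flatMap (compSeq τ m₀) := by
      have e : m₀ + (n + 1 - m₀) = n + 1 := by omega
      have h7 := compFrom_add τ 0 m₀ (n + 1 - m₀) b₁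
      rw [Nat.zero_add, e] at h7
      exact h7
    obtain ⟨c, hc⟩ := List.exists_mem_of_ne_nil _
      (compFrom_ne_nil hner m₀ (n + 1 - m₀) b₁)
    have hbB : b ∈ B b₁ := hs ▸ List.mem_flatMap.mpr ⟨c, hc, hm₀ c b⟩
    obtain ⟨j, hj⟩ := occAt_mem hocc (List.mem_append_left _ hbB)
    rw [← hj, hxconst j]
  exact hb12 ((hletter b₁).symm.trans (hletter b₂))
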